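/- arXiv:2601.09203 — 2 statements merged into one kernel-verified Lean document; each statement's English description precedes it below -/
import Mathlib

section
/- Let (Ω, μ) be a probability space, η_a, η_b, α_a, α_b real numbers, and f, f', g, g' : Ω → ℝ measurable functions with f(ω), f'(ω) ∈ [(1+η_a−|α_a|)/2, (1+η_a+|α_a|)/2] and g(ω), g'(ω) ∈ [(1+η_b−|α_b|)/2, (1+η_b+|α_b|)/2] for μ-almost every ω. Define the random variable S = f·g − f·g' + f'·g + f'·g' − (1+η_b)·f' − (1+η_a)·g + ((1+η_a)(1+η_b) − |α_a·α_b|)/2 and let m = ∫S dμ. Then the third cumulant of S satisfies |∫(S − m)³ dμ| ≤ |α_a·α_b|³/8. -/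
/-!
Centring the response functions, `f = (1 + ηa)/2 + u` and so on, turns `S` into
`u v - u v' + u' v + u' v' - |αa αb|/2` with `|u|, |u'| ≤ |αa|/2` and `|v|, |v'| ≤ |αb|/2`, so the
CHSH bound on the first four terms puts `S` in `[-|αa αb|, 0]`.

For a centred `Y` with values in `[-a, b]`, integrating the cubics `Y²`, `(Y + a)(b - Y)`,
`Y²(b - Y)` and `(Y + a)²(b - Y)`, nonnegative there, gives linear constraints on `V = E[Y²]` and
`K = E[Y³]` under which `K ≤ (a + b)³/8`. Applied to `±(S - m)` this bounds the third cumulant.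
-/

open MeasureTheory Set

theorem abs_sub_add_abs_add_le {v v' B : ℝ} (hv : |v| ≤ B) (hv' : |v'| ≤ B) :
    |v - v'| + |v + v'| ≤ 2 * B := by
  rw [abs_le] at hv hv'
  rcases abs_cases (v - v') with ⟨h₁, -⟩ | ⟨h₁, -⟩ <;>
    rcases abs_cases (v + v') with ⟨h₂, -⟩ | ⟨h₂, -⟩ <;> linarith

theorem abs_chsh_le {A B u u' v v' : ℝ} (hu : |u| ≤ A) (hu' : |u'| ≤ A) (hv : |v| ≤ B)
    (hv' : |v'| ≤ B) : |u * v - u * v' + u' * v + u' * v'| ≤ 2 * A * B := by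
  have hA : 0 ≤ A := (abs_nonneg u).trans hu
  calc |u * v - u * v' + u' * v + u' * v'|
      = |u * (v - v') + u' * (v + v')| := by ring_nf
    _ ≤ |u| * |v - v'| + |u'| * |v + v'| := by
        simpa only [abs_mul] using abs_add_le (u * (v - v')) (u' * (v + v'))
    _ ≤ A * |v - v'| + A * |v + v'| := by gcongr
    _ ≤ 2 * A * B := by nlinarith [abs_sub_add_abs_add_le hv hv']

theorem ch_mem_Icc {p q A B x x' y y' : ℝ}
    (hx : x ∈ Icc ((p - A) / 2) ((p + A) / 2)) (hx' : x' ∈ Icc ((p - A) / 2) ((p + A) / 2))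
    (hy : y ∈ Icc ((q - B) / 2) ((q + B) / 2)) (hy' : y' ∈ Icc ((q - B) / 2) ((q + B) / 2)) :
    x * y - x * y' + x' * y + x' * y' - q * x' - p * y + (p * q - A * B) / 2
      ∈ Icc (-(A * B)) 0 := by
  have centred {z c r : ℝ} (hz : z ∈ Icc ((c - r) / 2) ((c + r) / 2)) : |z - c / 2| ≤ r / 2 :=
    abs_sub_le_iff.2 ⟨by linarith [hz.2], by linarith [hz.1]⟩
  have hchsh := abs_le.1 <|
    abs_chsh_le (centred hx) (centred hx') (centred hy) (centred hy')
  constructor <;> nlinarith [hchsh]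

theorem le_add_pow_three_div_eight_of_moment_bounds {a b V K : ℝ} (ha : 0 ≤ a) (hb : 0 ≤ b)
    (hV : 0 ≤ V) (hVab : V ≤ a * b) (hK₁ : K ≤ b * V) (hK₂ : K ≤ (b - 2 * a) * V + a ^ 2 * b) :
    K ≤ (a + b) ^ 3 / 8 := by
  rcases le_or_gt b (2 * a) with h | h
  · -- eliminating `V` between the two constraints on `K`
    have key : 2 * a * K ≤ a ^ 2 * b ^ 2 := by
      nlinarith [mul_le_mul_of_nonneg_left hK₁ (by linarith : (0:ℝ) ≤ 2 * a - b),
        mul_le_mul_of_nonneg_left hK₂ hb]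
    nlinarith [mul_nonneg ha hb, mul_nonneg (mul_nonneg ha hb) hb,
      mul_nonneg ha (sq_nonneg (a - b)), sq_nonneg (a * b), pow_nonneg ha 3, pow_nonneg hb 3]
  · nlinarith [mul_le_mul_of_nonneg_left hVab (by linarith : (0:ℝ) ≤ b - 2 * a),
      mul_nonneg hb (sq_nonneg (2 * b - 5 * a)), mul_nonneg (mul_nonneg ha ha) hb,
      pow_nonneg ha 3]

section ThirdMoment

variable {Ω : Type*} [MeasurableSpace Ω] {μ : Measure Ω} [IsProbabilityMeasure μ]

theorem integral_pow_three_le_of_integral_eq_zero {Y : Ω → ℝ} {a b : ℝ}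
    (hY : AEMeasurable Y μ) (hbd : ∀ᵐ ω ∂μ, Y ω ∈ Icc (-a) b) (hmean : ∫ ω, Y ω ∂μ = 0) :
    ∫ ω, Y ω ^ 3 ∂μ ≤ (a + b) ^ 3 / 8 := by
  have hpow (n : ℕ) : Integrable (fun ω => Y ω ^ n) μ := by
    refine .of_bound (hY.pow_const n).aestronglyMeasurable ((|a| + |b|) ^ n) ?_
    filter_upwards [hbd] with ω hω
    rw [Real.norm_eq_abs, abs_pow]
    gcongr
    exact abs_le.2 ⟨by linarith [le_abs_self a, abs_nonneg b, hω.1],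
      by linarith [le_abs_self b, abs_nonneg a, hω.2]⟩
  have hY₁ : Integrable Y μ := by simpa using hpow 1
  set V := ∫ ω, Y ω ^ 2 ∂μ
  set K := ∫ ω, Y ω ^ 3 ∂μ
  have moment_ineq (c₀ c₁ c₂ c₃ : ℝ)
      (hp : ∀ y ∈ Icc (-a) b, 0 ≤ c₀ + c₁ * y + c₂ * y ^ 2 + c₃ * y ^ 3) :
      0 ≤ c₀ + c₂ * V + c₃ * K := by
    have h₁ : Integrable (fun ω => c₀ + c₁ * Y ω) μ := (integrable_const c₀).add (hY₁.const_mul c₁)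
    have h₂ : Integrable (fun ω => c₀ + c₁ * Y ω + c₂ * Y ω ^ 2) μ :=
      h₁.add ((hpow 2).const_mul c₂)
    have hint : ∫ ω, (c₀ + c₁ * Y ω + c₂ * Y ω ^ 2 + c₃ * Y ω ^ 3) ∂μ = c₀ + c₂ * V + c₃ * K := by
      rw [integral_add h₂ ((hpow 3).const_mul c₃), integral_add h₁ ((hpow 2).const_mul c₂),
        integral_add (integrable_const c₀) (hY₁.const_mul c₁),
        integral_const_mul, integral_const_mul, integral_const_mul, hmean]
      simp [V, K]
    rw [← hint]
    exact integral_nonneg_of_ae (hbd.mono fun ω hω => hp _ hω)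
  have ha : 0 ≤ a := by simpa using moment_ineq a 1 0 0 fun y hy => by linarith [hy.1]
  have hb : 0 ≤ b := by simpa using moment_ineq b (-1) 0 0 fun y hy => by linarith [hy.2]
  have hV : 0 ≤ V := by simpa using moment_ineq 0 0 1 0 fun y _ => by nlinarith [sq_nonneg y]
  have hVab : V ≤ a * b := by
    have := moment_ineq (a * b) (b - a) (-1) 0 fun y hy => by
      nlinarith [mul_nonneg (neg_le_iff_add_nonneg.1 hy.1) (sub_nonneg.2 hy.2)]
    linarith
  have hK₁ : K ≤ b * V := by
    have := moment_ineq 0 0 b (-1) fun y hy => by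
      nlinarith [mul_nonneg (sq_nonneg y) (sub_nonneg.2 hy.2)]
    linarith
  have hK₂ : K ≤ (b - 2 * a) * V + a ^ 2 * b := by
    have := moment_ineq (a ^ 2 * b) (2 * a * b - a ^ 2) (b - 2 * a) (-1) fun y hy => by
      nlinarith [mul_nonneg (sq_nonneg (y + a)) (sub_nonneg.2 hy.2)]
    linarith
  exact le_add_pow_three_div_eight_of_moment_bounds ha hb hV hVab hK₁ hK₂

theorem abs_integral_sub_integral_pow_three_le {X : Ω → ℝ} {c d : ℝ}
    (hX : AEMeasurable X μ) (hbd : ∀ᵐ ω ∂μ, X ω ∈ Icc c d) :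
    |∫ ω, (X ω - ∫ ω', X ω' ∂μ) ^ 3 ∂μ| ≤ (d - c) ^ 3 / 8 := by
  set m := ∫ ω', X ω' ∂μ
  have hmean : ∫ ω, (X ω - m) ∂μ = 0 := by
    rw [integral_sub (.of_mem_Icc c d hX hbd) (integrable_const m)]
    simp [m]
  have hupper := integral_pow_three_le_of_integral_eq_zero (a := m - c) (b := d - m)
    (hX.sub_const m) (hbd.mono fun ω hω => ⟨by linarith [hω.1], by linarith [hω.2]⟩) hmean
  have hlower := integral_pow_three_le_of_integral_eq_zero (Y := fun ω => -(X ω - m))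
    (a := d - m) (b := m - c) (hX.sub_const m).neg
    (hbd.mono fun ω hω => ⟨by linarith [hω.2], by linarith [hω.1]⟩)
    (by rw [integral_neg, hmean, neg_zero])
  simp only [Odd.neg_pow (by decide : Odd 3), integral_neg] at hlower
  rw [show m - c + (d - m) = d - c by ring] at hupper
  rw [show d - m + (m - c) = d - c by ring] at hlower
  exact abs_le.2 ⟨by linarith, hupper⟩

end ThirdMoment

/-- Third-cumulant (skewness) constraint on the generalized Clauser–Horne functional
in a local hidden-variable model: with `S` the hidden-variable realization of the CH
functional built from local response probabilities `f, f', g, g'` constrained between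
the extreme POVM eigenvalues, `|κ₃(S)| = |E[(S − m)³]| ≤ |αa·αb|³ / 8`. -/
theorem CH_third_cumulant_lhv_bound {Ω : Type*} [MeasurableSpace Ω] (μ : Measure Ω)
    [IsProbabilityMeasure μ] (ηa ηb αa αb : ℝ) (f f' g g' : Ω → ℝ)
    (hf : Measurable f) (hf' : Measurable f') (hg : Measurable g) (hg' : Measurable g')
    (hfb : ∀ᵐ ω ∂μ, f ω ∈ Set.Icc ((1 + ηa - |αa|) / 2) ((1 + ηa + |αa|) / 2))
    (hfb' : ∀ᵐ ω ∂μ, f' ω ∈ Set.Icc ((1 + ηa - |αa|) / 2) ((1 + ηa + |αa|) / 2))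
    (hgb : ∀ᵐ ω ∂μ, g ω ∈ Set.Icc ((1 + ηb - |αb|) / 2) ((1 + ηb + |αb|) / 2))
    (hgb' : ∀ᵐ ω ∂μ, g' ω ∈ Set.Icc ((1 + ηb - |αb|) / 2) ((1 + ηb + |αb|) / 2))
    (S : Ω → ℝ)
    (hS : ∀ ω, S ω =
      f ω * g ω - f ω * g' ω + f' ω * g ω + f' ω * g' ω
        - (1 + ηb) * f' ω - (1 + ηa) * g ω
        + ((1 + ηa) * (1 + ηb) - |αa * αb|) / 2) :
    |∫ ω, (S ω - ∫ ω', S ω' ∂μ) ^ 3 ∂μ| ≤ |αa * αb| ^ 3 / 8 := by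
  have hS_meas : Measurable S := by
    rw [funext hS]
    fun_prop
  have hS_mem : ∀ᵐ ω ∂μ, S ω ∈ Icc (-|αa * αb|) 0 := by
    filter_upwards [hfb, hfb', hgb, hgb'] with ω h₁ h₂ h₃ h₄
    rw [hS ω, abs_mul]
    exact ch_mem_Icc h₁ h₂ h₃ h₄
  simpa using abs_integral_sub_integral_pow_three_le hS_meas.aemeasurable hS_mem
end

section
/- Let α, a, t₁, t₂, t₃ ∈ ℝ and let ρ = (1/4)·(I⊗I + a·(σ₃⊗I) + a·(I⊗σ₃) + t₁·σ₁⊗σ₁ + t₂·σ₂⊗σ₂ + t₃·σ₃⊗σ₃) on ℂ²⊗ℂ². Let 𝓑 be the generalized Clauser–Horne operator with bias η_a = η_b = 0, unsharpness α_a = α, α_b = −α, and directions a⃗ = (0,0,1), a⃗' = (0,1,0), b⃗ = (0, 1/√2, −1/√2), b⃗' = (0, 1/√2, 1/√2). Writing ⟨X⟩ = Tr(ρ·X), the third cumulant κ₃ = ⟨𝓑³⟩ − 3⟨𝓑⟩⟨𝓑²⟩ + 2⟨𝓑⟩³ equals −(√2·α⁶/16)·(t₂ − t₃)·((t₂ −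 t₃)² − 3·t₁ − 1); in particular |κ₃| = (√2·α⁶/16)·|(t₂ − t₃)·((t₂ − t₃)² − 3·t₁ − 1)|, independently of a. -/
open Matrix Kronecker

noncomputable section

/-- The Pauli matrix σ₁. -/
def σ1 : Matrix (Fin 2) (Fin 2) ℂ := !![0, 1; 1, 0]

/-- The Pauli matrix σ₂. -/
def σ2 : Matrix (Fin 2) (Fin 2) ℂ := !![0, -Complex.I; Complex.I, 0]

/-- The Pauli matrix σ₃. -/
def σ3 : Matrix (Fin 2) (Fin 2) ℂ := !![1, 0; 0, -1]

/-- `σ · n = n₁σ₁ + n₂σ₂ + n₃σ₃` for a real vector `n ∈ ℝ³`. -/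
def pauliDot (n : Fin 3 → ℝ) : Matrix (Fin 2) (Fin 2) ℂ :=
  (n 0 : ℂ) • σ1 + (n 1 : ℂ) • σ2 + (n 2 : ℂ) • σ3

/-- Biased unsharp POVM element `E₊(n) = ((1+η)·I + α·σ·n)/2`. -/
def Eplus (η α : ℝ) (n : Fin 3 → ℝ) : Matrix (Fin 2) (Fin 2) ℂ :=
  ((1 / 2 : ℝ) : ℂ) • (((1 + η : ℝ) : ℂ) • (1 : Matrix (Fin 2) (Fin 2) ℂ)
    + (α : ℂ) • pauliDot n)

/-- The generalized Clauser–Horne operator on ℂ²⊗ℂ². -/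
def CHop (ηa ηb αa αb : ℝ) (a a' b b' : Fin 3 → ℝ) :
    Matrix (Fin 2 × Fin 2) (Fin 2 × Fin 2) ℂ :=
  Eplus ηa αa a ⊗ₖ Eplus ηb αb b - Eplus ηa αa a ⊗ₖ Eplus ηb αb b'
    + Eplus ηa αa a' ⊗ₖ Eplus ηb αb b + Eplus ηa αa a' ⊗ₖ Eplus ηb αb b'
    - ((1 + ηb : ℝ) : ℂ) • (Eplus ηa αa a' ⊗ₖ (1 : Matrix (Fin 2) (Fin 2) ℂ))
    - ((1 + ηa : ℝ) : ℂ) • ((1 : Matrix (Fin 2) (Fin 2) ℂ) ⊗ₖ Eplus ηb αb b)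
    + ((((1 + ηa) * (1 + ηb) - |αa * αb|) / 2 : ℝ) : ℂ) •
        (1 : Matrix (Fin 2 × Fin 2) (Fin 2 × Fin 2) ℂ)

end

noncomputable section

/-- The symmetric two-qubit X-state
`ρ = (I⊗I + a·σ₃⊗I + a·I⊗σ₃ + t₁·σ₁⊗σ₁ + t₂·σ₂⊗σ₂ + t₃·σ₃⊗σ₃)/4`. -/
def rhoX (a t1 t2 t3 : ℝ) : Matrix (Fin 2 × Fin 2) (Fin 2 × Fin 2) ℂ :=
  ((1 / 4 : ℝ) : ℂ) •
    ((1 : Matrix (Fin 2) (Fin 2) ℂ) ⊗ₖ (1 : Matrix (Fin 2) (Fin 2) ℂ)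
      + (a : ℂ) • (σ3 ⊗ₖ (1 : Matrix (Fin 2) (Fin 2) ℂ))
      + (a : ℂ) • ((1 : Matrix (Fin 2) (Fin 2) ℂ) ⊗ₖ σ3)
      + (t1 : ℂ) • (σ1 ⊗ₖ σ1) + (t2 : ℂ) • (σ2 ⊗ₖ σ2) + (t3 : ℂ) • (σ3 ⊗ₖ σ3))

/-- The generalized CH operator with bias `0`, unsharpness `α, −α`, and directions
`a⃗ = (0,0,1)`, `a⃗' = (0,1,0)`, `b⃗ = (0, 1/√2, −1/√2)`, `b⃗' = (0, 1/√2, 1/√2)`. -/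
def BopX (α : ℝ) : Matrix (Fin 2 × Fin 2) (Fin 2 × Fin 2) ℂ :=
  CHop 0 0 α (-α) ![0, 0, 1] ![0, 1, 0]
    ![0, 1 / Real.sqrt 2, -(1 / Real.sqrt 2)] ![0, 1 / Real.sqrt 2, 1 / Real.sqrt 2]

end

noncomputable section

/-- The third cumulant `κ₃ = ⟨𝓑³⟩ − 3⟨𝓑⟩⟨𝓑²⟩ + 2⟨𝓑⟩³` of the generalized CH
operator in the X-state, with `⟨X⟩ = Tr(ρ·X)`. -/
def kappa3X (α a t1 t2 t3 : ℝ) : ℂ :=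
  Matrix.trace (rhoX a t1 t2 t3 * BopX α ^ 3)
    - 3 * Matrix.trace (rhoX a t1 t2 t3 * BopX α) *
        Matrix.trace (rhoX a t1 t2 t3 * BopX α ^ 2)
    + 2 * Matrix.trace (rhoX a t1 t2 t3 * BopX α) ^ 3

end

/-!
Whatever the biases, the constant and single-site terms of the Clauser–Horne operator cancel, so
`𝓑 = -|αₐα_b|/2 + (αₐα_b/4)·(CHSH operator)`. For the chosen directions this is
`𝓑 = -α²/2 - (√2α²/4)·X` with `X = τ₂ - τ₃`, where `τᵢ = σᵢ ⊗ σᵢ`.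
The third cumulant is invariant under scalar shifts and homogeneous of degree three, so
`κ₃(𝓑) = -(√2α²/4)³ κ₃(X)`. The `τᵢ` square to `1` and multiply like `τᵢτⱼ = -τₖ`, whence
`X² = 2(1 + τ₁)` and `X³ = 4X`; together with `⟨τᵢ⟩_ρ = tᵢ` this gives
`κ₃(X) = 2m(m² - 3t₁ - 1)` with `m = t₂ - t₃`, and `a` never enters.
-/

section Cumulant

variable {R A : Type*} [CommRing R] [Ring A] [Algebra R A]

def thirdCumulant (φ : A →ₗ[R] R) (X : A) : R :=
  φ (X ^ 3) - 3 * φ X * φ (X ^ 2) + 2 * φ X ^ 3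

theorem thirdCumulant_smul (φ : A →ₗ[R] R) (c : R) (X : A) :
    thirdCumulant φ (c • X) = c ^ 3 * thirdCumulant φ X := by
  simp only [thirdCumulant, smul_pow, map_smul, smul_eq_mul]
  ring

theorem thirdCumulant_algebraMap_add (φ : A →ₗ[R] R) (hφ : φ 1 = 1) (c : R) (X : A) :
    thirdCumulant φ (algebraMap R A c + X) = thirdCumulant φ X := by
  have hφc : φ (algebraMap R A c) = c := by
    rw [Algebra.algebraMap_eq_smul_one, map_smul, hφ, smul_eq_mul, mul_one]
  simp only [thirdCumulant, (Algebra.commute_algebraMap_left c X).add_pow',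
    Finset.Nat.sum_antidiagonal_eq_sum_range_succ_mk, Finset.sum_range_succ,
    Finset.sum_range_zero, ← map_pow, ← Algebra.smul_def, map_add, map_nsmul, map_smul,
    pow_zero, hφc]
  norm_num [hφ]
  ring

end Cumulant

section Kronecker

variable {R : Type*} [CommRing R] {n : Type*}

theorem smul_kronecker_smul_self {m : Type*} (c : R) (M : Matrix m n R) :
    (c • M) ⊗ₖ (c • M) = (c * c) • (M ⊗ₖ M) := by
  rw [smul_kronecker, kronecker_smul, smul_smul]

variable [Fintype n]

def Matrix.expectation (ρ : Matrix n n R) : Matrix n n R →ₗ[R] R :=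
  (traceLinearMap n R R).comp (LinearMap.mulLeft R ρ)

theorem Matrix.expectation_apply (ρ X : Matrix n n R) : ρ.expectation X = trace (ρ * X) :=
  rfl

theorem kronecker_self_mul_kronecker_self_of_mul_eq {M N P : Matrix n n R} {c : R}
    (hc : c * c = -1) (h : M * N = c • P) : (M ⊗ₖ M) * (N ⊗ₖ N) = -(P ⊗ₖ P) := by
  rw [← mul_kronecker_mul, h, smul_kronecker_smul_self, hc, neg_one_smul]

end Kronecker

def chshOp (a a' b b' : Fin 3 → ℝ) : Matrix (Fin 2 × Fin 2) (Fin 2 × Fin 2) ℂ :=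
  pauliDot a ⊗ₖ pauliDot b - pauliDot a ⊗ₖ pauliDot b' + pauliDot a' ⊗ₖ pauliDot b
    + pauliDot a' ⊗ₖ pauliDot b'

theorem CHop_eq_smul_one_add_smul_chshOp (ηa ηb αa αb : ℝ) (a a' b b' : Fin 3 → ℝ) :
    CHop ηa ηb αa αb a a' b b' = ((-|αa * αb| / 2 : ℝ) : ℂ) • 1 +
      ((αa * αb / 4 : ℝ) : ℂ) • chshOp a a' b b' := by
  simp only [CHop, chshOp, Eplus, add_kronecker, kronecker_add, smul_kronecker, kronecker_smul,
    one_kronecker_one]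
  push_cast
  module

local notation "τ₁" => σ1 ⊗ₖ σ1
local notation "τ₂" => σ2 ⊗ₖ σ2
local notation "τ₃" => σ3 ⊗ₖ σ3

theorem chshOp_eq_sqrt_two_smul : chshOp ![0, 0, 1] ![0, 1, 0]
    ![0, 1 / Real.sqrt 2, -(1 / Real.sqrt 2)] ![0, 1 / Real.sqrt 2, 1 / Real.sqrt 2] =
    (Real.sqrt 2 : ℂ) • (τ₂ - τ₃) := by
  rw [one_div, ← Real.sqrt_div_self]
  simp only [chshOp, pauliDot, add_kronecker, kronecker_add, smul_kronecker, kronecker_smul]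
  simp
  module

theorem BopX_eq (α : ℝ) : BopX α = algebraMap ℂ _ ((-(α ^ 2 / 2) : ℝ) : ℂ) +
    ((-(Real.sqrt 2 * α ^ 2 / 4) : ℝ) : ℂ) • (τ₂ - τ₃) := by
  rw [BopX, CHop_eq_smul_one_add_smul_chshOp, chshOp_eq_sqrt_two_smul, smul_smul,
    Algebra.algebraMap_eq_smul_one]
  congr 2
  · rw [mul_neg, abs_neg, abs_mul_self]
    push_cast
    ring
  · push_cast
    ring

theorem σ1_mul_self : σ1 * σ1 = 1 := by
  ext i j; fin_cases i <;> fin_cases j <;> simp [σ1, mul_apply]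

theorem σ2_mul_self : σ2 * σ2 = 1 := by
  ext i j; fin_cases i <;> fin_cases j <;> simp [σ2, mul_apply]

theorem σ3_mul_self : σ3 * σ3 = 1 := by
  ext i j; fin_cases i <;> fin_cases j <;> simp [σ3, mul_apply]

theorem σ2_mul_σ1 : σ2 * σ1 = -Complex.I • σ3 := by
  ext i j; fin_cases i <;> fin_cases j <;> simp [σ1, σ2, σ3, mul_apply]

theorem σ3_mul_σ1 : σ3 * σ1 = Complex.I • σ2 := by
  ext i j; fin_cases i <;> fin_cases j <;> simp [σ1, σ2, σ3, mul_apply]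

theorem σ2_mul_σ3 : σ2 * σ3 = Complex.I • σ1 := by
  ext i j; fin_cases i <;> fin_cases j <;> simp [σ1, σ2, σ3, mul_apply]

theorem σ3_mul_σ2 : σ3 * σ2 = -Complex.I • σ1 := by
  ext i j; fin_cases i <;> fin_cases j <;> simp [σ1, σ2, σ3, mul_apply]

theorem τ₂_sub_τ₃_sq : (τ₂ - τ₃) ^ 2 = (2 : ℂ) • (1 + τ₁) := by
  have h22 : τ₂ * τ₂ = 1 := by rw [← mul_kronecker_mul, σ2_mul_self, one_kronecker_one]
  have h33 : τ₃ * τ₃ = 1 := by rw [← mul_kronecker_mul, σ3_mul_self, one_kronecker_one]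
  have h23 : τ₂ * τ₃ = -τ₁ :=
    kronecker_self_mul_kronecker_self_of_mul_eq Complex.I_mul_I σ2_mul_σ3
  have h32 : τ₃ * τ₂ = -τ₁ :=
    kronecker_self_mul_kronecker_self_of_mul_eq (by simp) σ3_mul_σ2
  rw [sq, sub_mul, mul_sub, mul_sub, h22, h33, h23, h32]
  module

theorem τ₂_sub_τ₃_pow_three : (τ₂ - τ₃) ^ 3 = (4 : ℂ) • (τ₂ - τ₃) := by
  have h21 : τ₂ * τ₁ = -τ₃ :=
    kronecker_self_mul_kronecker_self_of_mul_eq (by simp) σ2_mul_σ1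
  have h31 : τ₃ * τ₁ = -τ₂ :=
    kronecker_self_mul_kronecker_self_of_mul_eq Complex.I_mul_I σ3_mul_σ1
  rw [pow_succ', τ₂_sub_τ₃_sq, mul_smul_comm, mul_add, mul_one, sub_mul, h21, h31]
  module

theorem trace_rhoX (a t1 t2 t3 : ℝ) : trace (rhoX a t1 t2 t3) = 1 := by
  simp [rhoX, σ1, σ2, σ3, trace, Fintype.sum_prod_type, one_apply]
  ring

theorem trace_rhoX_mul_τ₁ (a t1 t2 t3 : ℝ) : trace (rhoX a t1 t2 t3 * τ₁) = t1 := by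
  simp [rhoX, σ1, σ2, σ3, trace, Fintype.sum_prod_type, mul_apply, one_apply]
  ring

theorem trace_rhoX_mul_τ₂ (a t1 t2 t3 : ℝ) : trace (rhoX a t1 t2 t3 * τ₂) = t2 := by
  simp [rhoX, σ1, σ2, σ3, trace, Fintype.sum_prod_type, mul_apply, one_apply]
  ring_nf

theorem trace_rhoX_mul_τ₃ (a t1 t2 t3 : ℝ) : trace (rhoX a t1 t2 t3 * τ₃) = t3 := by
  simp [rhoX, σ1, σ2, σ3, trace, Fintype.sum_prod_type, mul_apply, one_apply]
  ring

theorem thirdCumulant_expectation_rhoX_τ₂_sub_τ₃ (a t1 t2 t3 : ℝ) :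
    thirdCumulant (rhoX a t1 t2 t3).expectation (τ₂ - τ₃)
      = 2 * (t2 - t3) * ((t2 - t3) ^ 2 - 3 * t1 - 1) := by
  simp only [thirdCumulant, τ₂_sub_τ₃_sq, τ₂_sub_τ₃_pow_three, map_smul, map_add, map_sub,
    expectation_apply, mul_one, trace_rhoX, trace_rhoX_mul_τ₁, trace_rhoX_mul_τ₂,
    trace_rhoX_mul_τ₃, smul_eq_mul]
  ring

/-- Third cumulant of the CH operator in the X-state:
`κ₃ = −(√2·α⁶/16)·(t₂−t₃)·((t₂−t₃)²−3t₁−1)`, independently of `a`; in particular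
`|κ₃| = (√2·α⁶/16)·|(t₂−t₃)·((t₂−t₃)²−3t₁−1)|`. -/
theorem xstate_CH_third_cumulant (α a t1 t2 t3 : ℝ) :
    kappa3X α a t1 t2 t3
      = ((-(Real.sqrt 2 * α ^ 6 / 16) *
          ((t2 - t3) * ((t2 - t3) ^ 2 - 3 * t1 - 1)) : ℝ) : ℂ) ∧
    ‖kappa3X α a t1 t2 t3‖
      = Real.sqrt 2 * α ^ 6 / 16 * |(t2 - t3) * ((t2 - t3) ^ 2 - 3 * t1 - 1)| := by
  have hκ : kappa3X α a t1 t2 t3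
      = ((-(Real.sqrt 2 * α ^ 6 / 16) *
          ((t2 - t3) * ((t2 - t3) ^ 2 - 3 * t1 - 1)) : ℝ) : ℂ) := by
    have hρ : (rhoX a t1 t2 t3).expectation 1 = 1 := by
      rw [expectation_apply, mul_one, trace_rhoX]
    have hsqrt : (Real.sqrt 2 : ℂ) ^ 2 = 2 := by
      rw [← Complex.ofReal_pow, Real.sq_sqrt zero_le_two, Complex.ofReal_ofNat]
    change thirdCumulant (rhoX a t1 t2 t3).expectation (BopX α) = _
    rw [BopX_eq, thirdCumulant_algebraMap_add _ hρ, thirdCumulant_smul,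
      thirdCumulant_expectation_rhoX_τ₂_sub_τ₃]
    push_cast
    linear_combination
      (-(α : ℂ) ^ 6 * Real.sqrt 2 / 32 * (t2 - t3) * ((t2 - t3) ^ 2 - 3 * t1 - 1)) * hsqrt
  refine ⟨hκ, ?_⟩
  rw [hκ, Complex.norm_real, Real.norm_eq_abs, abs_mul, abs_neg,
    abs_of_nonneg (by positivity : 0 ≤ Real.sqrt 2 * α ^ 6 / 16)]
end
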